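/- The mirrored Fritz correlation p_FritzL is a valid correlation in the minimal 3-chain scenario which belongs to S1^[AB^L BC^O] but does not belong to S1^[AB^O BC^L]. -/
import Mathlib


open Finset

/-- A correlation in the minimal 3-chain scenario: `p a b c x z = p(a,b,c|x,z)`. -/
abbrev Corr : Type := Fin 2 → Fin 2 → Fin 2 → Fin 2 → Fin 2 → ℝ

/-- `p` is a valid correlation: nonnegative and normalized for every input pair. -/
def IsCorrelation (p : Corr) : Prop :=
  (∀ a b c x z, 0 ≤ p a b c x z) ∧
  (∀ x z, ∑ a : Fin 2, ∑ b : Fin 2, ∑ c : Fin 2, p a b c x z = 1)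

/-- Probability weights on the finite set `Fin n`. -/
def IsWeights {n : ℕ} (q : Fin n → ℝ) : Prop :=
  (∀ l, 0 ≤ q l) ∧ ∑ l, q l = 1

/-- A no-signalling box with binary outputs and input sets `X`, `Y`. -/
def IsNSBox {X Y : Type} [Fintype X] [Fintype Y]
    (nb : Fin 2 → Fin 2 → X → Y → ℝ) : Prop :=
  (∀ o1 o2 x y, 0 ≤ nb o1 o2 x y) ∧
  (∀ x y, ∑ o1 : Fin 2, ∑ o2 : Fin 2, nb o1 o2 x y = 1) ∧
  (∀ o1 x y y', ∑ o2 : Fin 2, nb o1 o2 x y = ∑ o2 : Fin 2, nb o1 o2 x y') ∧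
  (∀ o2 x x' y, ∑ o1 : Fin 2, nb o1 o2 x y = ∑ o1 : Fin 2, nb o1 o2 x' y)

/-- `S0`: classical 3-chain correlations. -/
def MemS0 (p : Corr) : Prop :=
  ∃ (n1 n2 : ℕ) (q1 : Fin n1 → ℝ) (q2 : Fin n2 → ℝ)
    (pA : Fin 2 → Fin 2 → Fin n1 → ℝ)
    (pB : Fin 2 → Fin n1 → Fin n2 → ℝ)
    (pC : Fin 2 → Fin 2 → Fin n2 → ℝ),
    IsWeights q1 ∧ IsWeights q2 ∧
    (∀ a x l1, 0 ≤ pA a x l1) ∧ (∀ x l1, ∑ a : Fin 2, pA a x l1 = 1) ∧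
    (∀ b l1 l2, 0 ≤ pB b l1 l2) ∧ (∀ l1 l2, ∑ b : Fin 2, pB b l1 l2 = 1) ∧
    (∀ c z l2, 0 ≤ pC c z l2) ∧ (∀ z l2, ∑ c : Fin 2, pC c z l2 = 1) ∧
    (∀ a b c x z, p a b c x z =
      ∑ l1, ∑ l2, q1 l1 * q2 l2 * pA a x l1 * pB b l1 l2 * pC c z l2)

/-- `S1^[AB^O BC^L]`: a no-signalling (OPT) source between Alice and Bob,
a classical source between Bob and Charlie. -/
def MemS1ABo (p : Corr) : Prop :=
  ∃ (n : ℕ) (q : Fin n → ℝ)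
    (nb : Fin 2 → Fin 2 → Fin 2 → Fin n → ℝ)
    (pC : Fin 2 → Fin 2 → Fin n → ℝ),
    IsWeights q ∧ IsNSBox nb ∧
    (∀ c z l, 0 ≤ pC c z l) ∧ (∀ z l, ∑ c : Fin 2, pC c z l = 1) ∧
    (∀ a b c x z, p a b c x z = ∑ l, q l * nb a b x l * pC c z l)

/-- `S1^[AB^L BC^O]`: a classical source between Alice and Bob,
a no-signalling (OPT) source between Bob and Charlie. -/
def MemS1BCo (p : Corr) : Prop :=
  ∃ (n : ℕ) (q : Fin n → ℝ)
    (pA : Fin 2 → Fin 2 → Fin n → ℝ)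
    (nb : Fin 2 → Fin 2 → Fin n → Fin 2 → ℝ),
    IsWeights q ∧
    (∀ a x l, 0 ≤ pA a x l) ∧ (∀ x l, ∑ a : Fin 2, pA a x l = 1) ∧
    IsNSBox nb ∧
    (∀ a b c x z, p a b c x z = ∑ l, q l * pA a x l * nb b c l z)

/-- `S2`: the no-signalling constraints of the 3-chain network. -/
def MemS2 (p : Corr) : Prop :=
  (∃ (pA : Fin 2 → Fin 2 → ℝ) (pC : Fin 2 → Fin 2 → ℝ),
    (∀ a x, 0 ≤ pA a x) ∧ (∀ x, ∑ a : Fin 2, pA a x = 1) ∧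
    (∀ c z, 0 ≤ pC c z) ∧ (∀ z, ∑ c : Fin 2, pC c z = 1) ∧
    (∀ a c x z, ∑ b : Fin 2, p a b c x z = pA a x * pC c z)) ∧
  (∀ a b x z z', ∑ c : Fin 2, p a b c x z = ∑ c : Fin 2, p a b c x z') ∧
  (∀ b c x x' z, ∑ a : Fin 2, p a b c x z = ∑ a : Fin 2, p a b c x' z)

/-- The mirrored Fritz correlation `p_FritzL(a,b,c|x,z) = (1/8)(1 + (-1)^{b+c+a·z}/√2)`. -/
noncomputable def pFritzL : Corr := fun a b c _x z =>
  (1/8) * (1 + (-1 : ℝ) ^ ((b : ℕ) + (c : ℕ) + (a : ℕ) * (z : ℕ)) / Real.sqrt 2)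


lemma sqrt2_gt_one : 1 < Real.sqrt 2 := by
  nlinarith [Real.sq_sqrt (show (0:ℝ) ≤ 2 by norm_num), Real.sqrt_nonneg 2]

lemma aux_nonneg (k : ℕ) : (0:ℝ) ≤ 1 + (-1:ℝ)^k / Real.sqrt 2 := by
  have h1 := sqrt2_gt_one
  have h2 : (0:ℝ) < Real.sqrt 2 := by linarith
  rcases Nat.even_or_odd k with h | h
  · rw [h.neg_one_pow]; positivity
  · rw [h.neg_one_pow]
    have h3 : (1:ℝ) / Real.sqrt 2 ≤ 1 := by rw [div_le_one h2]; linarith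
    have h4 : (-1:ℝ) / Real.sqrt 2 = -(1 / Real.sqrt 2) := by ring
    rw [h4]; linarith

lemma key_bound (b0 b1 c0 c1 : ℝ) (hb0 : |b0| ≤ 1/2) (hb1 : |b1| ≤ 1/2)
    (hc0 : |c0| ≤ 1) (hc1 : |c1| ≤ 1) :
    b0 * (c0 + c1) + b1 * (c0 - c1) ≤ 1 := by
  have h1 : b0 * (c0 + c1) ≤ (1/2) * |c0 + c1| := by
    calc b0 * (c0 + c1) ≤ |b0 * (c0 + c1)| := le_abs_self _
    _ = |b0| * |c0 + c1| := abs_mul _ _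
    _ ≤ (1/2) * |c0 + c1| := by gcongr
  have h2 : b1 * (c0 - c1) ≤ (1/2) * |c0 - c1| := by
    calc b1 * (c0 - c1) ≤ |b1 * (c0 - c1)| := le_abs_self _
    _ = |b1| * |c0 - c1| := abs_mul _ _
    _ ≤ (1/2) * |c0 - c1| := by gcongr
  have hc0' := abs_le.mp hc0
  have hc1' := abs_le.mp hc1
  rcases abs_cases (c0 + c1) with ⟨h3, _⟩ | ⟨h3, _⟩ <;>
    rcases abs_cases (c0 - c1) with ⟨h4, _⟩ | ⟨h4, _⟩ <;> obtain ⟨_, _⟩ := hc0' <;> linarith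

set_option maxHeartbeats 2000000 in
/-- the mirrored Fritz correlation is a valid correlation belonging
to `S1^[AB^L BC^O]` but not to `S1^[AB^O BC^L]`. -/
theorem fritzL_in_s1BCo_not_s1ABo :
    IsCorrelation pFritzL ∧ MemS1BCo pFritzL ∧ ¬ MemS1ABo pFritzL := by
  refine ⟨⟨?_, ?_⟩, ?_, ?_⟩
  · -- nonnegativity
    intro a b c x z
    have := aux_nonneg ((b : ℕ) + (c : ℕ) + (a : ℕ) * (z : ℕ))
    unfold pFritzL
    positivity
  · -- normalization
    intro x z
    fin_cases z <;> simp [pFritzL, Fin.sum_univ_two] <;> ring_nf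
  · -- membership in S1^[AB^L BC^O]
    refine ⟨2, fun _ => 1/2, fun a _x l => if a = l then 1 else 0,
      fun b c l z => (1/4 : ℝ) * (1 + (-1:ℝ)^((b:ℕ)+(c:ℕ)+(l:ℕ)*(z:ℕ))/Real.sqrt 2),
      ⟨fun _ => by norm_num, by simp [Fin.sum_univ_two]⟩,
      fun a x l => by positivity,
      fun x l => by fin_cases l <;> simp [Fin.sum_univ_two],
      ⟨fun b c l z => ?_, ?_, ?_, ?_⟩, ?_⟩
    · have := aux_nonneg ((b:ℕ)+(c:ℕ)+(l:ℕ)*(z:ℕ)); positivity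
    · intro l z; fin_cases l <;> fin_cases z <;> simp [Fin.sum_univ_two] <;> ring_nf
    · intro b l z z'; fin_cases b <;> fin_cases l <;> fin_cases z <;> fin_cases z' <;>
        simp [Fin.sum_univ_two] <;> ring_nf
    · intro c l l' z; fin_cases c <;> fin_cases l <;> fin_cases l' <;> fin_cases z <;>
        simp [Fin.sum_univ_two] <;> ring_nf
    · intro a b c x z
      fin_cases a <;> fin_cases b <;> fin_cases c <;> fin_cases z <;>
        simp [pFritzL, Fin.sum_univ_two] <;> ring_nf
  · -- not in S1^[AB^O BC^L]
    rintro ⟨n, q, nb, pC, ⟨hq0, hq1⟩, ⟨hnb0, hnb1, hnbA, hnbB⟩, hpC0, hpC1, heq⟩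
    have hs1 := sqrt2_gt_one
    have hs0 : (0:ℝ) < Real.sqrt 2 := by linarith
    have hs2 : Real.sqrt 2 * Real.sqrt 2 = 2 := Real.mul_self_sqrt (by norm_num)
    have hn : 0 < n := by
      by_contra h
      push_neg at h
      interval_cases n
      simp at hq1
    set l0 : Fin n := ⟨0, hn⟩ with hl0
    have hmarg : ∀ (a : Fin 2) (l : Fin n),
        nb a 0 0 l + nb a 1 0 l = nb a 0 0 l0 + nb a 1 0 l0 := by
      intro a l
      have h := hnbA a 0 l l0
      rwa [Fin.sum_univ_two, Fin.sum_univ_two] at h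
    have hpCsum : ∀ (z : Fin 2) (l : Fin n), pC 0 z l + pC 1 z l = 1 := by
      intro z l; have h := hpC1 z l; rwa [Fin.sum_univ_two] at h
    have hm : ∀ a : Fin 2, nb a 0 0 l0 + nb a 1 0 l0 = 1/2 := by
      intro a
      have h1 : pFritzL a 0 0 0 0 + pFritzL a 0 1 0 0 + pFritzL a 1 0 0 0 + pFritzL a 1 1 0 0
          = 1/2 := by
        fin_cases a <;> simp [pFritzL] <;> ring_nf
      rw [heq a 0 0 0 0, heq a 0 1 0 0, heq a 1 0 0 0, heq a 1 1 0 0,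
        ← Finset.sum_add_distrib, ← Finset.sum_add_distrib, ← Finset.sum_add_distrib] at h1
      have h2 : ∀ l : Fin n,
          q l * nb a 0 0 l * pC 0 0 l + q l * nb a 0 0 l * pC 1 0 l
          + q l * nb a 1 0 l * pC 0 0 l + q l * nb a 1 0 l * pC 1 0 l
          = q l * (nb a 0 0 l0 + nb a 1 0 l0) := by
        intro l
        have hc := hpCsum 0 l
        have hb := hmarg a l
        linear_combination (q l * nb a 0 0 l + q l * nb a 1 0 l) * hc + q l * hb
      rw [Finset.sum_congr rfl (fun l _ => h2 l), ← Finset.sum_mul, hq1, one_mul] at h1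
      exact h1
    have hF : ∀ a z : Fin 2,
        ∑ l, q l * ((nb a 0 0 l - nb a 1 0 l) * (pC 0 z l - pC 1 z l))
        = (-1:ℝ)^((a:ℕ)*(z:ℕ)) * (Real.sqrt 2 / 4) := by
      intro a z
      have hcombo : pFritzL a 0 0 0 z - pFritzL a 0 1 0 z - pFritzL a 1 0 0 z + pFritzL a 1 1 0 z
          = (-1:ℝ)^((a:ℕ)*(z:ℕ)) * (Real.sqrt 2 / 4) := by
        fin_cases a <;> fin_cases z <;> simp [pFritzL] <;> field_simp <;> ring_nf <;>
          nlinarith [hs2]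
      rw [← hcombo, heq a 0 0 0 z, heq a 0 1 0 z, heq a 1 0 0 z, heq a 1 1 0 z,
        ← Finset.sum_sub_distrib, ← Finset.sum_sub_distrib, ← Finset.sum_add_distrib]
      exact Finset.sum_congr rfl fun l _ => by ring
    have hchsh : ∑ l, q l *
        ((nb 0 0 0 l - nb 0 1 0 l) * ((pC 0 0 l - pC 1 0 l) + (pC 0 1 l - pC 1 1 l))
        + (nb 1 0 0 l - nb 1 1 0 l) * ((pC 0 0 l - pC 1 0 l) - (pC 0 1 l - pC 1 1 l)))
        = Real.sqrt 2 := by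
      have e00 := hF 0 0; have e01 := hF 0 1; have e10 := hF 1 0; have e11 := hF 1 1
      norm_num at e00 e01 e10 e11
      have hsplit : ∑ l, q l *
          ((nb 0 0 0 l - nb 0 1 0 l) * ((pC 0 0 l - pC 1 0 l) + (pC 0 1 l - pC 1 1 l))
          + (nb 1 0 0 l - nb 1 1 0 l) * ((pC 0 0 l - pC 1 0 l) - (pC 0 1 l - pC 1 1 l)))
          = (∑ l, q l * ((nb 0 0 0 l - nb 0 1 0 l) * (pC 0 0 l - pC 1 0 l)))
          + (∑ l, q l * ((nb 0 0 0 l - nb 0 1 0 l) * (pC 0 1 l - pC 1 1 l)))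
          + (∑ l, q l * ((nb 1 0 0 l - nb 1 1 0 l) * (pC 0 0 l - pC 1 0 l)))
          - (∑ l, q l * ((nb 1 0 0 l - nb 1 1 0 l) * (pC 0 1 l - pC 1 1 l))) := by
        rw [← Finset.sum_add_distrib, ← Finset.sum_add_distrib, ← Finset.sum_sub_distrib]
        exact Finset.sum_congr rfl fun l _ => by ring
      rw [hsplit, e00, e01, e10, e11]; ring
    have hbound : ∑ l, q l *
        ((nb 0 0 0 l - nb 0 1 0 l) * ((pC 0 0 l - pC 1 0 l) + (pC 0 1 l - pC 1 1 l))
        + (nb 1 0 0 l - nb 1 1 0 l) * ((pC 0 0 l - pC 1 0 l) - (pC 0 1 l - pC 1 1 l)))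
        ≤ 1 := by
      calc _ ≤ ∑ l, q l := by
            apply Finset.sum_le_sum
            intro l _
            have hβ : ∀ a : Fin 2, |nb a 0 0 l - nb a 1 0 l| ≤ 1/2 := by
              intro a
              have h1 := hnb0 a 0 0 l
              have h2 := hnb0 a 1 0 l
              have h3 := hmarg a l
              have h4 := hm a
              rw [abs_le]; constructor <;> linarith
            have hC : ∀ z : Fin 2, |pC 0 z l - pC 1 z l| ≤ 1 := by
              intro z
              have h1 := hpC0 0 z l
              have h2 := hpC0 1 z l
              have h3 := hpCsum z l
              rw [abs_le]; constructor <;> linarith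
            have hT := key_bound _ _ _ _ (hβ 0) (hβ 1) (hC 0) (hC 1)
            calc q l * _ ≤ q l * 1 := mul_le_mul_of_nonneg_left hT (hq0 l)
            _ = q l := mul_one _
      _ = 1 := hq1
    rw [hchsh] at hbound
    linarith
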